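/- arXiv:1707.02251 — 2 statements merged into one kernel-verified Lean document; each statement's English description precedes it below -/
import Mathlib

section
/- (Splitting a Minimal Homotopy, part 3.) Let γ₁, γ₂, γ₃ : [0,1] → ℂ be continuous paths with common endpoints such that the range of γ₂ is Lebesgue-null, let H₁ be a homotopy from γ₁ to γ₂ and H₂ a homotopy from γ₂ to γ₃ with Area(H₁ + H₂) = σ(γ₁, γ₃) < ∞. If H₂′ is another minimum homotopy from γ₂ to γ₃, i.e. Area(H₂′) = σ(γ₂, γ₃), then H₁ + H₂′ is also minimum: Area(H₁ + H₂′) = σ(γ₁, γ₃). -/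
/-!
Over a point `p` off the range of `γ₂`, the fiber of `H₁ + H₂` is the disjoint union of the
fibers of `H₁` and `H₂`, reparametrised into the halves `s ≤ 1/2` and `s ≥ 1/2`; hence
`E_{H₁+H₂} = E_{H₁} + E_{H₂}` almost everywhere and `Area(H₁ + H₂) = Area(H₁) + Area(H₂)`.
Replacing `H₂` by a homotopy of no larger area thus keeps the concatenation minimal.

Additivity of the integral needs `E_H` to be measurable. For a compact fiber, `E_H(x) > n` iff
some `n + 1` finite unions of basic open sets cover the fiber, meet it and are disjoint on it;
each of these conditions is Borel, since continuous images of open subsets of the compact square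
are `σ`-compact.
-/

open MeasureTheory unitInterval ENNReal

noncomputable section

/-- `homE H p` is the number of connected components of the fiber `H⁻¹({p})`,
as an extended natural number. -/
def homE {a b : ℂ} {γ₁ γ₂ : Path a b} (H : Path.Homotopy γ₁ γ₂) (p : ℂ) : ℕ∞ :=
  ENat.card (ConnectedComponents ↥(⇑H ⁻¹' {p}))

/-- The homotopy area `Area(H) = ∫⁻ x, E_H(x)`. -/
def homArea {a b : ℂ} {γ₁ γ₂ : Path a b} (H : Path.Homotopy γ₁ γ₂) : ℝ≥0∞ :=
  ∫⁻ p, (homE H p : ℝ≥0∞)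

/-- The minimum homotopy area `σ(γ₁, γ₂)`, the infimum of `Area(H)` over all
homotopies rel endpoints from `γ₁` to `γ₂`. -/
def minHomArea {a b : ℂ} (γ₁ γ₂ : Path a b) : ℝ≥0∞ :=
  ⨅ H : Path.Homotopy γ₁ γ₂, homArea H

open Set Function Topology TopologicalSpace

namespace ConnectedComponents

variable {X Y : Type*} [TopologicalSpace X] [TopologicalSpace Y]

def equivOfHomeomorph (h : X ≃ₜ Y) : ConnectedComponents X ≃ ConnectedComponents Y where
  toFun := h.continuous.connectedComponentsMap
  invFun := h.symm.continuous.connectedComponentsMap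
  left_inv := surjective_coe.forall.2 fun x => by simp [Continuous.connectedComponentsMap_mk]
  right_inv := surjective_coe.forall.2 fun y => by simp [Continuous.connectedComponentsMap_mk]

def sumEquiv :
    ConnectedComponents (X ⊕ Y) ≃ ConnectedComponents X ⊕ ConnectedComponents Y where
  toFun := (continuous_coe.sumMap continuous_coe).connectedComponentsLift
  invFun := Sum.elim (continuous_coe.comp continuous_inl).connectedComponentsLift
    (continuous_coe.comp continuous_inr).connectedComponentsLift
  left_inv := surjective_coe.forall.2 fun w => by cases w <;> rfl
  right_inv := by
    rintro (c | c) <;> obtain ⟨x, rfl⟩ := surjective_coe c <;> rfl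

theorem card_sum :
    ENat.card (ConnectedComponents (X ⊕ Y)) =
      ENat.card (ConnectedComponents X) + ENat.card (ConnectedComponents Y) := by
  rw [ENat.card_congr sumEquiv, ENat.card_sum]

theorem natCast_lt_card_of_isOpen_partition {n : ℕ} {V : Fin (n + 1) → Set X}
    (hV : ∀ i, IsOpen (V i)) (hcover : ⋃ i, V i = univ) (hne : ∀ i, (V i).Nonempty)
    (hdisj : Pairwise (Disjoint on V)) : (n : ℕ∞) < ENat.card (ConnectedComponents X) := by
  choose x hx using hne
  have hclopen : ∀ i, IsClopen (V i) := fun i => by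
    have hcompl : (V i)ᶜ = ⋃ (j) (_ : j ≠ i), V j := by
      ext y
      simp only [mem_compl_iff, mem_iUnion, exists_prop]
      obtain ⟨k, hk⟩ := mem_iUnion.1 (hcover ▸ mem_univ y)
      exact ⟨fun hy => ⟨k, fun h => hy (h ▸ hk), hk⟩,
        fun ⟨j, hji, hj⟩ hi => (hdisj hji).notMem_of_mem_left hj hi⟩
    exact ⟨isOpen_compl_iff.1 (hcompl ▸ isOpen_biUnion fun j _ => hV j), hV i⟩
  have hinj : Injective fun i => (x i : ConnectedComponents X) := fun i j hij =>
    hdisj.eq <| not_disjoint_iff.2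
      ⟨x j, (hclopen i).connectedComponent_subset (hx i) (coe_eq_coe'.1 hij.symm), hx j⟩
  calc (n : ℕ∞) < n + 1 := ENat.natCast_lt_natCast.2 n.lt_succ_self
    _ = ENat.card (Fin (n + 1)) := by simp
    _ ≤ _ := ENat.card_le_card_of_injective hinj

-- `π₀` of a compact Hausdorff space is profinite, so a single discrete quotient of it
-- separates any `n + 1` of its points.
theorem exists_continuous_surjective_fin_of_natCast_lt_card [CompactSpace X] [T2Space X]
    {n : ℕ} (h : (n : ℕ∞) < ENat.card (ConnectedComponents X)) :
    ∃ g : X → Fin (n + 1), Continuous g ∧ Surjective g := by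
  obtain ⟨φ, -⟩ := Fin.Embedding.exists_embedding_disjoint_range_of_add_le_ENat_card
    (s := (∅ : Set (ConnectedComponents X))) (n := n + 1)
    (by simpa using (ENat.add_one_le_iff (ENat.natCast_ne_top n)).2 h)
  have hsep : ∀ i j, i ≠ j → ∃ Q : DiscreteQuotient (ConnectedComponents X),
      Q.proj (φ i) ≠ Q.proj (φ j) := fun i j hij => by
    by_contra! h
    exact hij (φ.injective (DiscreteQuotient.eq_of_forall_proj_eq h))
  choose! Q hQ using hsep
  let Q₀ := Finset.univ.inf fun ij : Fin (n + 1) × Fin (n + 1) => Q ij.1 ij.2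
  have hinj : Injective (Q₀.proj ∘ φ) := by
    intro i j hij
    by_contra hne
    have hle : Q₀ ≤ Q i j :=
      Finset.inf_le (f := fun ij => Q ij.1 ij.2) (Finset.mem_univ (i, j))
    apply hQ i j hne
    rw [← DiscreteQuotient.ofLE_proj hle, ← DiscreteQuotient.ofLE_proj hle]
    exact congrArg (DiscreteQuotient.ofLE hle) hij
  exact ⟨invFun (Q₀.proj ∘ φ) ∘ Q₀.proj ∘ (↑),
    continuous_of_discreteTopology.comp (Q₀.proj_continuous.comp continuous_coe),
    (invFun_surjective hinj).comp (Q₀.proj_surjective.comp surjective_coe)⟩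

end ConnectedComponents

section FiniteUnionsOfBasis

variable {K : Type*} [TopologicalSpace K]

variable (K) in
def finiteUnionsOfBasis [SecondCountableTopology K] : Set (Set K) :=
  sUnion '' {s | s.Finite ∧ s ⊆ countableBasis K}

variable [SecondCountableTopology K]

theorem countable_finiteUnionsOfBasis : (finiteUnionsOfBasis K).Countable :=
  (Set.countable_ofPred_finite_subset (countable_countableBasis K)).image _

theorem IsCompact.exists_mem_finiteUnionsOfBasis {C W : Set K} (hC : IsCompact C)
    (hW : IsOpen W) (hCW : C ⊆ W) : ∃ U ∈ finiteUnionsOfBasis K, C ⊆ U ∧ U ⊆ W := by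
  obtain ⟨s, hsb, hsfin, hCs⟩ := hC.elim_finite_subcover_image (c := id)
    (b := {v ∈ countableBasis K | v ⊆ W}) (fun v hv => (isBasis_countableBasis K).isOpen hv.1)
    fun x hx => by
      obtain ⟨v, hvB, hxv, hvW⟩ :=
        (isBasis_countableBasis K).exists_subset_of_mem_open (hCW hx) hW
      exact mem_biUnion ⟨hvB, hvW⟩ hxv
  refine ⟨⋃₀ s, ⟨s, ⟨hsfin, fun v hv => (hsb hv).1⟩, rfl⟩, by rwa [sUnion_eq_biUnion],
    sUnion_subset fun v hv => (hsb hv).2⟩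

theorem isOpen_of_mem_finiteUnionsOfBasis {U : Set K} (hU : U ∈ finiteUnionsOfBasis K) :
    IsOpen U := by
  obtain ⟨s, ⟨-, hsB⟩, rfl⟩ := hU
  exact isOpen_sUnion fun v hv => (isBasis_countableBasis K).isOpen (hsB hv)

theorem IsCompact.natCast_lt_card_connectedComponents_iff [T2Space K] {F : Set K}
    (hF : IsCompact F) (n : ℕ) :
    (n : ℕ∞) < ENat.card (ConnectedComponents F) ↔
      ∃ U : Fin (n + 1) → finiteUnionsOfBasis K, F ⊆ ⋃ i, (U i : Set K) ∧
        (∀ i, (F ∩ U i).Nonempty) ∧ Pairwise (Disjoint on fun i => F ∩ U i) := by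
  have := isCompact_iff_compactSpace.1 hF
  constructor
  · intro h
    obtain ⟨g, hg, hgs⟩ :=
      ConnectedComponents.exists_continuous_surjective_fin_of_natCast_lt_card h
    have hcpt : ∀ s : Set F, IsClosed s → IsCompact ((↑) '' s : Set K) := fun s hs =>
      hs.isCompact.image continuous_subtype_val
    have hsep : ∀ i, ∃ U ∈ finiteUnionsOfBasis K,
        (↑) '' (g ⁻¹' {i}) ⊆ U ∧ U ⊆ ((↑) '' (g ⁻¹' {i})ᶜ)ᶜ := fun i =>
      (hcpt _ ((isClosed_discrete {i}).preimage hg)).exists_mem_finiteUnionsOfBasis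
        (hcpt _ ((isOpen_discrete {i}).preimage hg).isClosed_compl).isClosed.isOpen_compl
        (subset_compl_iff_disjoint_right.2
          (disjoint_image_of_injective Subtype.val_injective disjoint_compl_right))
    choose U hUmem hCU hUD using hsep
    have hgU : ∀ (x : F) i, (x : K) ∈ U i → g x = i := fun x i hx => by
      by_contra hne
      exact hUD i hx ⟨x, hne, rfl⟩
    refine ⟨fun i => ⟨U i, hUmem i⟩,
      fun x hx => mem_iUnion.2 ⟨g ⟨x, hx⟩, hCU _ ⟨⟨x, hx⟩, rfl, rfl⟩⟩, fun i => ?_,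
      fun i j hij => ?_⟩
    · obtain ⟨x, rfl⟩ := hgs i
      exact ⟨x, x.2, hCU _ ⟨x, rfl, rfl⟩⟩
    · exact Set.disjoint_left.2 fun x hxi hxj =>
        hij ((hgU ⟨x, hxi.1⟩ i hxi.2).symm.trans (hgU ⟨x, hxj.1⟩ j hxj.2))
  · rintro ⟨U, hcover, hne, hdisj⟩
    refine ConnectedComponents.natCast_lt_card_of_isOpen_partition
      (V := fun i => ((↑) : F → K) ⁻¹' U i)
      (fun i => (isOpen_of_mem_finiteUnionsOfBasis (U i).2).preimage continuous_subtype_val)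
      (eq_univ_of_forall fun x => by simpa using hcover x.2) (fun i => ?_)
      fun i j hij => Set.disjoint_left.2 fun x hxi hxj =>
        Set.disjoint_left.1 (hdisj hij) ⟨x.2, hxi⟩ ⟨x.2, hxj⟩
    obtain ⟨x, hxF, hxU⟩ := hne i
    exact ⟨⟨x, hxF⟩, hxU⟩

end FiniteUnionsOfBasis

theorem IsOpen.measurableSet_image {K Y : Type*} [PseudoEMetricSpace K] [CompactSpace K]
    [TopologicalSpace Y] [T2Space Y] [MeasurableSpace Y] [OpensMeasurableSpace Y]
    {U : Set K} (hU : IsOpen U) {f : K → Y} (hf : Continuous f) : MeasurableSet (f '' U) := by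
  obtain ⟨C, hC, -, rfl, -⟩ := hU.exists_iUnion_isClosed
  rw [image_iUnion]
  exact .iUnion fun n => ((hC n).isCompact.image hf).isClosed.measurableSet

theorem ENat.measurable_of_measurableSet_natCast_lt {α : Type*} [MeasurableSpace α]
    {f : α → ℕ∞} (hf : ∀ n : ℕ, MeasurableSet {a | (n : ℕ∞) < f a}) : Measurable f := by
  refine measurable_to_countable' fun x => ?_
  induction x using ENat.recTopCoe with
  | top =>
    simp_rw [preimage, mem_singleton_iff, ENat.eq_top_iff_forall_gt, ofPred_forall]
    exact .iInter hf
  | coe n =>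
    cases n with
    | zero =>
      convert (hf 0).compl using 1
      ext a
      simp [pos_iff_ne_zero]
    | succ k =>
      convert (hf k).diff (hf (k + 1)) using 1
      ext a
      simp only [preimage, mem_singleton_iff, mem_ofPred_eq, mem_sdiff, not_lt, le_antisymm_iff,
        Nat.cast_add, Nat.cast_one, ENat.add_one_le_iff (ENat.natCast_ne_top k)]
      tauto

theorem measurable_card_connectedComponents_preimage_singleton {K Y : Type*} [MetricSpace K]
    [CompactSpace K] [TopologicalSpace Y] [T2Space Y] [MeasurableSpace Y] [OpensMeasurableSpace Y]
    {f : K → Y} (hf : Continuous f) :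
    Measurable fun y => ENat.card (ConnectedComponents (f ⁻¹' {y})) := by
  refine ENat.measurable_of_measurableSet_natCast_lt fun n => ?_
  simp_rw [(isClosed_singleton.preimage hf).isCompact.natCast_lt_card_connectedComponents_iff,
    ofPred_exists]
  have := (countable_finiteUnionsOfBasis (K := K)).to_subtype
  refine .iUnion fun U => ?_
  have hU : ∀ i, IsOpen (U i : Set K) := fun i => isOpen_of_mem_finiteUnionsOfBasis (U i).2
  -- the fiber misses `f '' (⋃ i, U i)ᶜ`, meets each `f '' U i` and misses each `f '' (U i ∩ U j)`
  convert ((((isOpen_iUnion hU).isClosed_compl.isCompact.image hf).isClosed.measurableSet.compl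
    |>.inter (.iInter fun i => (hU i).measurableSet_image hf))).inter
    (.iInter fun i => .iInter fun j => .iInter fun (_ : i ≠ j) =>
      (((hU i).inter (hU j)).measurableSet_image hf).compl) using 1
  ext y
  simp only [mem_ofPred_eq, subset_def, mem_iUnion, Set.Nonempty, Pairwise, onFun,
    Set.disjoint_left, mem_inter_iff, mem_preimage, mem_singleton_iff, mem_compl_iff, mem_image,
    mem_iInter, not_exists, and_assoc]
  refine and_congr ?_ (and_congr ?_ ?_)
  · exact forall_congr' fun x => by grind
  · exact forall_congr' fun i => by grind
  · exact forall_congr' fun i => forall_congr' fun j => by grind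

namespace unitInterval

def firstHalf (s : I) : I := ⟨s / 2, by linarith [s.2.1], by linarith [s.2.2]⟩

def secondHalf (s : I) : I := ⟨(s + 1) / 2, by linarith [s.2.1], by linarith [s.2.2]⟩

@[fun_prop]
theorem continuous_firstHalf : Continuous firstHalf := by unfold firstHalf; fun_prop

@[fun_prop]
theorem continuous_secondHalf : Continuous secondHalf := by unfold secondHalf; fun_prop

theorem firstHalf_injective : Injective firstHalf := fun s t h => by
  have : (s : ℝ) / 2 = t / 2 := congrArg Subtype.val h
  exact Subtype.ext (by linarith)

theorem secondHalf_injective : Injective secondHalf := fun s t h => by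
  have : ((s : ℝ) + 1) / 2 = (t + 1) / 2 := congrArg Subtype.val h
  exact Subtype.ext (by linarith)

theorem firstHalf_eq_secondHalf_iff {s t : I} :
    firstHalf s = secondHalf t ↔ s = 1 ∧ t = 0 := by
  refine ⟨fun h => ?_, fun ⟨hs, ht⟩ => Subtype.ext (by simp [firstHalf, secondHalf, hs, ht])⟩
  have : (s : ℝ) / 2 = (t + 1) / 2 := congrArg Subtype.val h
  exact ⟨Subtype.ext (show (s : ℝ) = 1 by linarith [s.2.2, t.2.1]),
    Subtype.ext (show (t : ℝ) = 0 by linarith [s.2.2, t.2.1])⟩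

theorem range_firstHalf_union_range_secondHalf :
    range firstHalf ∪ range secondHalf = univ := by
  refine eq_univ_of_forall fun u => ?_
  by_cases h : (u : ℝ) ≤ 1 / 2
  · exact Or.inl ⟨⟨2 * u, by linarith [u.2.1], by linarith⟩, Subtype.ext (by simp [firstHalf])⟩
  · exact Or.inr ⟨⟨2 * u - 1, by linarith, by linarith [u.2.2]⟩,
      Subtype.ext (by simp [secondHalf])⟩

end unitInterval

namespace ContinuousMap.Homotopy

variable {X Y : Type*} [TopologicalSpace X] [TopologicalSpace Y] {f₀ f₁ f₂ : C(X, Y)}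
  (F : Homotopy f₀ f₁) (G : Homotopy f₁ f₂)

theorem trans_apply_firstHalf (s : I) (x : X) : F.trans G (firstHalf s, x) = F (s, x) := by
  rw [trans_apply, dif_pos (by simp [firstHalf]; linarith [s.2.2])]
  congr 3
  simp [firstHalf]; ring

theorem trans_apply_secondHalf (s : I) (x : X) : F.trans G (secondHalf s, x) = G (s, x) := by
  rw [trans_apply]
  split_ifs with h
  · obtain rfl : s = 0 :=
      Subtype.ext (le_antisymm (show (s : ℝ) ≤ 0 by simp [secondHalf] at h; linarith) s.2.1)
    rw [G.apply_zero]
    convert F.apply_one x using 3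
    ext
    simp [secondHalf]
  · congr 3
    simp [secondHalf]; ring

theorem card_connectedComponents_trans_preimage_singleton [CompactSpace X] [T2Space X]
    [T1Space Y] {p : Y} (hp : p ∉ range f₁) :
    ENat.card (ConnectedComponents (F.trans G ⁻¹' {p})) =
      ENat.card (ConnectedComponents (F ⁻¹' {p})) +
        ENat.card (ConnectedComponents (G ⁻¹' {p})) := by
  let ι₁ : F ⁻¹' {p} → F.trans G ⁻¹' {p} := fun q =>
    ⟨(firstHalf q.1.1, q.1.2), by rw [mem_preimage, trans_apply_firstHalf]; exact q.2⟩
  let ι₂ : G ⁻¹' {p} → F.trans G ⁻¹' {p} := fun q =>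
    ⟨(secondHalf q.1.1, q.1.2), by rw [mem_preimage, trans_apply_secondHalf]; exact q.2⟩
  have hinj : Injective (Sum.elim ι₁ ι₂) := by
    refine Injective.sumElim (fun q q' h => ?_) (fun q q' h => ?_) fun q q' h => ?_
    · exact Subtype.ext <|
        Prod.ext (firstHalf_injective (congrArg (·.1.1) h)) (congrArg (·.1.2) h)
    · exact Subtype.ext <|
        Prod.ext (secondHalf_injective (congrArg (·.1.1) h)) (congrArg (·.1.2) h)
    · have hq : q.1.1 = 1 := (firstHalf_eq_secondHalf_iff.1 (congrArg (·.1.1) h)).1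
      refine hp ⟨q.1.2, ?_⟩
      rw [← F.apply_one, ← hq]
      exact q.2
  have hsurj : Surjective (Sum.elim ι₁ ι₂) := by
    rintro ⟨⟨u, x⟩, hu⟩
    rcases (range_firstHalf_union_range_secondHalf ▸ mem_univ u : u ∈ _) with
      ⟨s, rfl⟩ | ⟨s, rfl⟩
    · exact ⟨.inl ⟨(s, x), by simpa [trans_apply_firstHalf] using hu⟩, rfl⟩
    · exact ⟨.inr ⟨(s, x), by simpa [trans_apply_secondHalf] using hu⟩, rfl⟩
  have hcont : Continuous (Sum.elim ι₁ ι₂) := by fun_prop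
  have hcompact : ∀ {g₀ g₁ : C(X, Y)} (H : Homotopy g₀ g₁), CompactSpace (H ⁻¹' {p}) := fun H =>
    isCompact_iff_compactSpace.1 (isClosed_singleton.preimage H.continuous).isCompact
  have := hcompact F
  have := hcompact G
  rw [← ConnectedComponents.card_sum]
  exact ENat.card_congr (ConnectedComponents.equivOfHomeomorph
    (hcont.homeoOfEquivCompactToT2 (f := .ofBijective _ ⟨hinj, hsurj⟩))).symm

end ContinuousMap.Homotopy

theorem homE_trans {a b : ℂ} {γ₁ γ₂ γ₃ : Path a b} (H₁ : Path.Homotopy γ₁ γ₂)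
    (H₂ : Path.Homotopy γ₂ γ₃) {p : ℂ} (hp : p ∉ range γ₂) :
    homE (H₁.trans H₂) p = homE H₁ p + homE H₂ p :=
  H₁.toHomotopy.card_connectedComponents_trans_preimage_singleton H₂.toHomotopy hp

theorem measurable_homE {a b : ℂ} {γ₁ γ₂ : Path a b} (H : Path.Homotopy γ₁ γ₂) :
    Measurable (homE H) :=
  measurable_card_connectedComponents_preimage_singleton H.continuous

theorem homArea_trans {a b : ℂ} {γ₁ γ₂ γ₃ : Path a b} (H₁ : Path.Homotopy γ₁ γ₂)
    (H₂ : Path.Homotopy γ₂ γ₃) (hnull : volume (range γ₂) = 0) :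
    homArea (H₁.trans H₂) = homArea H₁ + homArea H₂ := by
  have hadd : (fun p => (homE (H₁.trans H₂) p : ℝ≥0∞)) =ᵐ[volume]
      fun p => (homE H₁ p : ℝ≥0∞) + homE H₂ p := by
    filter_upwards [measure_eq_zero_iff_ae_notMem.1 hnull] with p hp
    rw [homE_trans H₁ H₂ hp, ENat.toENNReal_add]
  rw [homArea, lintegral_congr_ae hadd,
    lintegral_add_left (f := fun p => (homE H₁ p : ℝ≥0∞))
      (Measurable.of_discrete.comp (measurable_homE H₁))]
  rfl

theorem stmt_8_general {a b : ℂ} (γ₁ γ₂ γ₃ : Path a b)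
    (H₁ : Path.Homotopy γ₁ γ₂) (H₂ H₂' : Path.Homotopy γ₂ γ₃)
    (hnull : volume (Set.range γ₂) = 0)
    (hmin : homArea (H₁.trans H₂) = minHomArea γ₁ γ₃)
    (hmin' : homArea H₂' = minHomArea γ₂ γ₃) :
    homArea (H₁.trans H₂') = minHomArea γ₁ γ₃ :=
  le_antisymm
    (calc homArea (H₁.trans H₂') = homArea H₁ + homArea H₂' := homArea_trans H₁ H₂' hnull
      _ ≤ homArea H₁ + homArea H₂ := by gcongr; exact hmin' ▸ iInf_le _ H₂
      _ = minHomArea γ₁ γ₃ := by rw [← homArea_trans H₁ H₂ hnull, hmin])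
    (iInf_le _ _)

/-- Splitting a minimal homotopy, part 3: replacing the second sub-homotopy of a minimum
concatenated homotopy by any other minimum homotopy again yields a minimum homotopy. -/
theorem stmt_8 {a b : ℂ} (γ₁ γ₂ γ₃ : Path a b)
    (H₁ : Path.Homotopy γ₁ γ₂) (H₂ H₂' : Path.Homotopy γ₂ γ₃)
    (hnull : volume (Set.range γ₂) = 0)
    (hmin : homArea (H₁.trans H₂) = minHomArea γ₁ γ₃)
    (hfin : minHomArea γ₁ γ₃ < ⊤)
    (hmin' : homArea H₂' = minHomArea γ₂ γ₃) :
    homArea (H₁.trans H₂') = minHomArea γ₁ γ₃ :=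
  stmt_8_general γ₁ γ₂ γ₃ H₁ H₂ H₂' hnull hmin hmin'
end
end

section
/- (Basepoint independence of minimum homotopy area.) Let C : ℝ → ℂ be a continuous 1-periodic map whose range is Lebesgue-null, and let t₀ ∈ ℝ. Let C_{t₀}(t) = C(t + t₀) be the shifted loop. Then the minimum homotopy area from the path C|[0,1] to the constant path at C(0) equals the minimum homotopy area from the path C_{t₀}|[0,1] to the constant path at C(t₀). -/
open MeasureTheory unitInterval ENNReal

noncomputable section

/-- The restriction of a loop `C : ℝ → ℂ` (with `C 0 = C 1 = p`) to `[0,1]`,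
as a `Path p p`. -/
def pathOfLoopAt (C : ℝ → ℂ) (p : ℂ) (hC : Continuous C) (h0 : C 0 = p) (h1 : C 1 = p) :
    Path p p where
  toFun t := C t
  continuous_toFun := hC.comp continuous_subtype_val
  source' := by simpa using h0
  target' := by simpa using h1

open Classical in
/-- The winding number `wn(x, C) = (1/(2πi)) ∫₀¹ C′(t)/(C(t) − x) dt` of a loop `C`
about a point `x ∉ C(ℝ)`; it is defined to be `0` for `x ∈ C(ℝ)`. -/
def windingNumber (C : ℝ → ℂ) (x : ℂ) : ℂ :=
  if x ∈ Set.range C then 0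
  else (1 / (2 * (Real.pi : ℂ) * Complex.I)) * ∫ t in (0:ℝ)..1, deriv C t / (C t - x)

/-- The winding area `W(C) = ∫⁻ x, ‖wn(x,C)‖`. -/
def windArea (C : ℝ → ℂ) : ℝ≥0∞ :=
  ∫⁻ x, (‖windingNumber C x‖₊ : ℝ≥0∞)

/-!
Moving the basepoint from `C 0` to `C t₀` conjugates the loop by the arc `η` of `C` between
them. Given a nullhomotopy `H` of `C|[0,1]`, one first deforms `C_{t₀}` to `η⁻¹ · C · η` inside
`range C` (both are `C` composed with paths in the simply connected space `ℝ`), then runs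
`η⁻¹ · H · η`, and finally contracts `η⁻¹ · η` inside `range C`. Off the null set `range C` the
fibres of this nullhomotopy of `C_{t₀}` are affine copies of those of `H`, so it has the same area.
By symmetry the two minimum areas agree.
-/

open Function Set

theorem Homeomorph.card_connectedComponents_eq {X Y : Type*} [TopologicalSpace X]
    [TopologicalSpace Y] (h : X ≃ₜ Y) :
    ENat.card (ConnectedComponents X) = ENat.card (ConnectedComponents Y) :=
  ENat.card_congr (h.isQuotientMap.isCoinducing.connectedComponentsHomeomorph
    fun y => by simpa [h.preimage_symm] using isConnected_singleton).toEquiv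

namespace unitInterval

def lowerHalf (u : I) : I := ⟨u / 2, by linarith [u.2.1], by linarith [u.2.2]⟩

def upperHalf (u : I) : I := ⟨(u + 1) / 2, by linarith [u.2.1], by linarith [u.2.2]⟩

@[simp] lemma coe_lowerHalf (u : I) : (lowerHalf u : ℝ) = u / 2 := rfl

@[simp] lemma coe_upperHalf (u : I) : (upperHalf u : ℝ) = (u + 1) / 2 := rfl

@[fun_prop] lemma continuous_lowerHalf : Continuous lowerHalf := by
  unfold lowerHalf; fun_prop

@[fun_prop] lemma continuous_upperHalf : Continuous upperHalf := by
  unfold upperHalf; fun_prop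

lemma lowerHalf_injective : Injective lowerHalf := fun u v h =>
  Subtype.ext (by simpa using congrArg Subtype.val h)

lemma upperHalf_injective : Injective upperHalf := fun u v h =>
  Subtype.ext (by simpa using congrArg Subtype.val h)

end unitInterval

open unitInterval

section Fibers

theorem homE_eq_of_comp_eq {a b a' b' : ℂ} {γ₁ γ₂ : Path a b} {δ₁ δ₂ : Path a' b'}
    (H : γ₁.Homotopy γ₂) (K : δ₁.Homotopy δ₂) {φ : I × I → I × I} (hφ : Continuous φ)
    (hφ_inj : Injective φ) (hKφ : ∀ z, K (φ z) = H z) {x : ℂ} (hx : K ⁻¹' {x} ⊆ range φ) :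
    homE K x = homE H x := by
  have : CompactSpace (H ⁻¹' {x}) :=
    isCompact_iff_compactSpace.mp (isClosed_singleton.preimage H.continuous).isCompact
  let f : H ⁻¹' {x} → K ⁻¹' {x} := fun z => ⟨φ z, (hKφ z).trans z.2⟩
  have hf : Bijective f := by
    refine ⟨fun z w h => Subtype.ext (hφ_inj (congrArg Subtype.val h)), fun z => ?_⟩
    obtain ⟨w, hw⟩ := hx z.2
    exact ⟨⟨w, (hKφ w).symm.trans (hw ▸ z.2)⟩, Subtype.ext hw⟩
  have hf_cont : Continuous (Equiv.ofBijective f hf) :=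
    (hφ.comp continuous_subtype_val).subtype_mk _
  exact (hf_cont.homeoOfEquivCompactToT2.card_connectedComponents_eq).symm

variable {x₀ x₁ x₂ x : ℂ}

theorem homE_trans_of_left_ne {p₀ p₁ p₂ : Path x₀ x₁} (F : p₀.Homotopy p₁) (G : p₁.Homotopy p₂)
    (hF : ∀ z, F z ≠ x) : homE (F.trans G) x = homE G x := by
  refine homE_eq_of_comp_eq G (F.trans G) (φ := Prod.map upperHalf id) (by fun_prop)
    (upperHalf_injective.prodMap injective_id) (fun ⟨u, t⟩ => ?_) fun ⟨s, t⟩ hz => ?_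
  · rw [Path.Homotopy.trans_apply]
    split_ifs with h
    · have hu : u = 0 := (Icc.coe_eq_zero (x := u)).mp (by simp at h; linarith [u.2.1])
      subst hu
      convert F.apply_one t using 2 <;> simp
    · exact congrArg G (Prod.ext (Subtype.ext (by simp; ring)) rfl)
  · rw [mem_preimage, mem_singleton_iff, Path.Homotopy.trans_apply] at hz
    split_ifs at hz with h
    · exact absurd hz (hF _)
    · exact ⟨(⟨2 * s - 1, two_mul_sub_one_mem_iff.2 ⟨(not_le.1 h).le, s.2.2⟩⟩, t),
        Prod.ext (Subtype.ext (show ((2 * s - 1 : ℝ) + 1) / 2 = s by ring)) rfl⟩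

theorem homE_trans_of_right_ne {p₀ p₁ p₂ : Path x₀ x₁} (F : p₀.Homotopy p₁) (G : p₁.Homotopy p₂)
    (hG : ∀ z, G z ≠ x) : homE (F.trans G) x = homE F x := by
  refine homE_eq_of_comp_eq F (F.trans G) (φ := Prod.map lowerHalf id) (by fun_prop)
    (lowerHalf_injective.prodMap injective_id) (fun ⟨u, t⟩ => ?_) fun ⟨s, t⟩ hz => ?_
  · rw [Path.Homotopy.trans_apply]
    split_ifs with h
    · exact congrArg F (Prod.ext (Subtype.ext (by simp; ring)) rfl)
    · have hu : u = 1 := (Icc.coe_eq_one (x := u)).mp (by simp at h; linarith [u.2.2])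
      subst hu
      convert G.apply_zero t using 2 <;> simp
  · rw [mem_preimage, mem_singleton_iff, Path.Homotopy.trans_apply] at hz
    split_ifs at hz with h
    · exact ⟨(⟨2 * s, (mul_pos_mem_iff zero_lt_two).2 ⟨s.2.1, h⟩⟩, t),
        Prod.ext (Subtype.ext (show (2 * s : ℝ) / 2 = s by ring)) rfl⟩
    · exact absurd hz (hG _)

theorem homE_hcomp_of_left_ne {p₀ q₀ : Path x₀ x₁} {p₁ q₁ : Path x₁ x₂} (F : p₀.Homotopy q₀)
    (G : p₁.Homotopy q₁) (hF : ∀ z, F z ≠ x) : homE (F.hcomp G) x = homE G x := by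
  refine homE_eq_of_comp_eq G (F.hcomp G) (φ := Prod.map id upperHalf) (by fun_prop)
    (injective_id.prodMap upperHalf_injective) (fun ⟨s, u⟩ => ?_) fun ⟨s, t⟩ hz => ?_
  · rw [Path.Homotopy.hcomp_apply]
    split_ifs with h
    · have hu : u = 0 := (Icc.coe_eq_zero (x := u)).mp (by simp at h; linarith [u.2.1])
      subst hu
      convert (F.eval s).target using 2 <;> simp
    · exact congrArg (G.eval s) (Subtype.ext (by simp; ring))
  · rw [mem_preimage, mem_singleton_iff, Path.Homotopy.hcomp_apply] at hz
    split_ifs at hz with h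
    · exact absurd hz (hF _)
    · exact ⟨(s, ⟨2 * t - 1, two_mul_sub_one_mem_iff.2 ⟨(not_le.1 h).le, t.2.2⟩⟩),
        Prod.ext rfl (Subtype.ext (show ((2 * t - 1 : ℝ) + 1) / 2 = t by ring))⟩

theorem homE_hcomp_of_right_ne {p₀ q₀ : Path x₀ x₁} {p₁ q₁ : Path x₁ x₂} (F : p₀.Homotopy q₀)
    (G : p₁.Homotopy q₁) (hG : ∀ z, G z ≠ x) : homE (F.hcomp G) x = homE F x := by
  refine homE_eq_of_comp_eq F (F.hcomp G) (φ := Prod.map id lowerHalf) (by fun_prop)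
    (injective_id.prodMap lowerHalf_injective) (fun ⟨s, u⟩ => ?_) fun ⟨s, t⟩ hz => ?_
  · rw [Path.Homotopy.hcomp_apply]
    split_ifs with h
    · exact congrArg (F.eval s) (Subtype.ext (by simp; ring))
    · have hu : u = 1 := (Icc.coe_eq_one (x := u)).mp (by simp at h; linarith [u.2.2])
      subst hu
      convert (G.eval s).source using 2 <;> simp
  · rw [mem_preimage, mem_singleton_iff, Path.Homotopy.hcomp_apply] at hz
    split_ifs at hz with h
    · exact ⟨(s, ⟨2 * t, (mul_pos_mem_iff zero_lt_two).2 ⟨t.2.1, h⟩⟩),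
        Prod.ext rfl (Subtype.ext (show (2 * t : ℝ) / 2 = t by ring))⟩
    · exact absurd hz (hG _)

end Fibers

theorem minHomArea_le_of_homotopy_conj {a a' b b' : ℂ} {γ γ' : Path a a'} {η : Path a b}
    {η' : Path a' b'} {δ δ' : Path b b'} {S : Set ℂ} (hS : volume S = 0)
    (F₁ : δ.Homotopy (η.symm.trans (γ.trans η'))) (F₂ : (η.symm.trans (γ'.trans η')).Homotopy δ')
    (hF₁ : ∀ z, F₁ z ∈ S) (hF₂ : ∀ z, F₂ z ∈ S) (hη : ∀ t, η t ∈ S) (hη' : ∀ t, η' t ∈ S) :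
    minHomArea δ δ' ≤ minHomArea γ γ' := by
  refine le_iInf fun H => iInf_le_of_le
    (F₁.trans (((Path.Homotopy.refl η.symm).hcomp (H.hcomp (.refl η'))).trans F₂)) (le_of_eq ?_)
  refine lintegral_congr_ae ?_
  filter_upwards [measure_eq_zero_iff_ae_notMem.mp hS] with x hx
  have hne {α : Type} {f : α → ℂ} (hf : ∀ z, f z ∈ S) (z : α) : f z ≠ x := fun h => hx (h ▸ hf z)
  rw [homE_trans_of_left_ne _ _ (hne hF₁), homE_trans_of_right_ne _ _ (hne hF₂),
    homE_hcomp_of_left_ne _ _ (hne fun z => hη _), homE_hcomp_of_right_ne _ _ (hne fun z => hη' _)]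

section Factorization

variable {X Y : Type*} [TopologicalSpace X] [TopologicalSpace Y] {f : X → Y}
  {x y z : X} {b b' b'' : Y}

theorem Path.coe_symm_eq_comp {δ : Path b b'} {u : Path x y} (h : ⇑δ = f ∘ ⇑u) :
    ⇑δ.symm = f ∘ ⇑u.symm := by
  ext t; simp [h]

theorem Path.coe_trans_eq_comp {δ₁ : Path b b'} {δ₂ : Path b' b''} {u₁ : Path x y}
    {u₂ : Path y z} (h₁ : ⇑δ₁ = f ∘ ⇑u₁) (h₂ : ⇑δ₂ = f ∘ ⇑u₂) :
    ⇑(δ₁.trans δ₂) = f ∘ ⇑(u₁.trans u₂) := by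
  ext t; simp only [Path.trans_apply, comp_apply]; split_ifs <;> simp [h₁, h₂]

theorem Path.Homotopy.exists_range_subset_of_coe_eq_comp [SimplyConnectedSpace X]
    (hf : Continuous f) {δ₁ δ₂ : Path b b'} {u₁ u₂ : Path x y} (h₁ : ⇑δ₁ = f ∘ ⇑u₁)
    (h₂ : ⇑δ₂ = f ∘ ⇑u₂) : ∃ F : δ₁.Homotopy δ₂, ∀ z, F z ∈ range f := by
  obtain ⟨G⟩ := SimplyConnectedSpace.paths_homotopic u₁ u₂
  refine ⟨{ toFun := fun z => f (G z)
            continuous_toFun := hf.comp G.continuous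
            map_zero_left := fun t => by simp [h₁]
            map_one_left := fun t => by simp [h₂]
            prop' := fun s t ht => ?_ }, fun z => ⟨_, rfl⟩⟩
  rcases ht with rfl | rfl
  · simpa using (congrFun h₁ 0).symm
  · simpa using (congrFun h₁ 1).symm

end Factorization

theorem minHomArea_le_of_periodic {C : ℝ → ℂ} (hC : Continuous C) (hper : Periodic C 1)
    (hnull : volume (range C) = 0) {a b : ℝ} {γ : Path (C a) (C a)} {δ : Path (C b) (C b)}
    (hγ : ∀ t : I, γ t = C (a + t)) (hδ : ∀ t : I, δ t = C (b + t)) :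
    minHomArea δ (.refl (C b)) ≤ minHomArea γ (.refl (C a)) := by
  let η := (Path.segment a b).map hC
  have hη : ⇑η = C ∘ ⇑(Path.segment a b) := rfl
  -- by periodicity, `η` also lifts to the segment starting where the lift of `γ` ends
  have hη₁ : ⇑η = C ∘ ⇑(Path.segment (a + 1) (b + 1)) := by
    ext t
    simpa [η, AffineMap.lineMap_apply, add_assoc] using (hper (t * (b - a) + a)).symm
  have hγ' : ⇑γ = C ∘ ⇑(Path.segment a (a + 1)) := by
    ext t; simp [hγ, AffineMap.lineMap_apply, add_comm]
  have hδ' : ⇑δ = C ∘ ⇑(Path.segment b (b + 1)) := by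
    ext t; simp [hδ, AffineMap.lineMap_apply, add_comm]
  obtain ⟨F₁, hF₁⟩ := Path.Homotopy.exists_range_subset_of_coe_eq_comp hC hδ'
    (Path.coe_trans_eq_comp (Path.coe_symm_eq_comp hη) (Path.coe_trans_eq_comp hγ' hη₁))
  have hrefl (c : ℝ) : ⇑(Path.refl (C c)) = C ∘ ⇑(Path.refl c) := rfl
  obtain ⟨F₂, hF₂⟩ := Path.Homotopy.exists_range_subset_of_coe_eq_comp hC
    (Path.coe_trans_eq_comp (Path.coe_symm_eq_comp hη) (Path.coe_trans_eq_comp (hrefl a) hη))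
    (hrefl b)
  exact minHomArea_le_of_homotopy_conj hnull F₁ F₂ hF₁ hF₂ (fun t => ⟨_, rfl⟩) fun t => ⟨_, rfl⟩

/-- Basepoint independence of the minimum nullhomotopy area: shifting the parametrization of
a loop with Lebesgue-null range does not change its minimum nullhomotopy area. -/
theorem stmt_18 (C : ℝ → ℂ) (hC : Continuous C) (hper : Function.Periodic C 1)
    (hnull : volume (Set.range C) = 0) (t₀ : ℝ) :
    minHomArea (pathOfLoopAt C (C 0) hC rfl (by simpa using hper 0)) (Path.refl (C 0)) =
      minHomArea
        (pathOfLoopAt (fun t => C (t + t₀)) (C t₀) (hC.comp (by continuity))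
          (by simp) (by simpa [add_comm] using hper t₀))
        (Path.refl (C t₀)) := by
  refine le_antisymm (minHomArea_le_of_periodic hC hper hnull ?_ ?_)
    (minHomArea_le_of_periodic hC hper hnull ?_ ?_) <;>
  intro t <;> simp [pathOfLoopAt, add_comm]
end
end
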